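/- Let C and H be commutative Hopf algebras over a field k such that C is an H-bicomodule Hopf algebra, let B be a Rota-Baxter co-operator on H, let R : C → C be a linear map, and define B̃ : C ⋉ H → C ⋉ H by B̃(c ⋉ h) = R(c₍₀₎[0]) ⋉ B(c₍₋₁₎ · c₍₀₎[1] · h). If B̃ is an algebra map, then R is an algebra map, i.e. R(cd) = R(c)R(d) for all c, d ∈ C and R(1) = 1. -/

import Mathlib

open TensorProduct

noncomputable section

variable {k : Type} [Field k]

/-- `B` is a Rota–Baxter co-operator w.r.t. a comultiplication `Δ` and antipode `S` on a
commutative algebra `V`:  `B` is an algebra map satisfying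
`B(x₁) ⊗ B(x₂) = B(x)₁ · B(B(x)₂ · S(B(x)₄)) ⊗ B(x)₃` for all `x`, where the Sweedler
components are given by arbitrary finite representations of the (iterated)
comultiplications. -/
def IsRotaBaxterCoOp {V : Type} [CommRing V] [Module k V]
    (Δ : V →ₗ[k] V ⊗[k] V) (S : V →ₗ[k] V) (B : V →ₗ[k] V) : Prop :=
  B 1 = 1 ∧ (∀ x y : V, B (x * y) = B x * B y) ∧
  ∀ (x : V) (ι κ κ1 κ2 : Type) (s : Finset ι) (y z : ι → V)
    (t : Finset κ) (u v : κ → V)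
    (t1 : κ → Finset κ1) (u1 u2 : κ → κ1 → V)
    (t2 : κ → Finset κ2) (v1 v2 : κ → κ2 → V),
    Δ x = ∑ i ∈ s, y i ⊗ₜ[k] z i →
    Δ (B x) = ∑ j ∈ t, u j ⊗ₜ[k] v j →
    (∀ j, Δ (u j) = ∑ l ∈ t1 j, u1 j l ⊗ₜ[k] u2 j l) →
    (∀ j, Δ (v j) = ∑ m ∈ t2 j, v1 j m ⊗ₜ[k] v2 j m) →
    ∑ i ∈ s, B (y i) ⊗ₜ[k] B (z i) =
      ∑ j ∈ t, ∑ l ∈ t1 j, ∑ m ∈ t2 j,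
        (u1 j l * B (u2 j l * S (v2 j m))) ⊗ₜ[k] v1 j m

/-- The data of an `H`-bicomodule Hopf algebra structure on `C`, relative to prescribed
comultiplications `ΔC, ΔH`, counits `εC, εH` and antipode `SC`:  a left and a right
`H`-coaction which are algebra maps, commute with each other, are comodule-coalgebra
maps, and commute with the antipode. -/
structure BicomoduleHopfData (k : Type) [Field k] (C H : Type) [CommRing C] [CommRing H]
    [Algebra k C] [Algebra k H]
    (ΔC : C →ₗ[k] C ⊗[k] C) (εC : C →ₗ[k] k) (SC : C →ₗ[k] C)
    (ΔH : H →ₗ[k] H ⊗[k] H) (εH : H →ₗ[k] k) where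
  rhol : C →ₗ[k] H ⊗[k] C
  rhor : C →ₗ[k] C ⊗[k] H
  coassoc_l : (TensorProduct.assoc k H H C).toLinearMap ∘ₗ LinearMap.rTensor C ΔH ∘ₗ rhol =
    LinearMap.lTensor H rhol ∘ₗ rhol
  counit_coact_l : (TensorProduct.lid k C).toLinearMap ∘ₗ LinearMap.rTensor C εH ∘ₗ rhol =
    LinearMap.id
  coassoc_r : (TensorProduct.assoc k C H H).toLinearMap ∘ₗ LinearMap.rTensor H rhor ∘ₗ rhor =
    LinearMap.lTensor C ΔH ∘ₗ rhor
  counit_coact_r : (TensorProduct.rid k C).toLinearMap ∘ₗ LinearMap.lTensor C εH ∘ₗ rhor =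
    LinearMap.id
  bicomodule : LinearMap.lTensor H rhor ∘ₗ rhol =
    (TensorProduct.assoc k H C H).toLinearMap ∘ₗ LinearMap.rTensor H rhol ∘ₗ rhor
  rhol_one : rhol 1 = 1 ⊗ₜ[k] 1
  rhol_mul : ∀ c d : C, rhol (c * d) = rhol c * rhol d
  rhor_one : rhor 1 = 1 ⊗ₜ[k] 1
  rhor_mul : ∀ c d : C, rhor (c * d) = rhor c * rhor d
  comul_rhol : LinearMap.lTensor H ΔC ∘ₗ rhol =
    TensorProduct.map (LinearMap.mul' k H) LinearMap.id ∘ₗ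
      (TensorProduct.tensorTensorTensorComm k H C H C).toLinearMap ∘ₗ
        TensorProduct.map rhol rhol ∘ₗ ΔC
  comul_rhor : LinearMap.rTensor H ΔC ∘ₗ rhor =
    TensorProduct.map LinearMap.id (LinearMap.mul' k H) ∘ₗ
      (TensorProduct.tensorTensorTensorComm k C H C H).toLinearMap ∘ₗ
        TensorProduct.map rhor rhor ∘ₗ ΔC
  counit_rhol : (TensorProduct.rid k H).toLinearMap ∘ₗ LinearMap.lTensor H εC ∘ₗ rhol =
    Algebra.linearMap k H ∘ₗ εC
  counit_rhor : (TensorProduct.lid k H).toLinearMap ∘ₗ LinearMap.rTensor H εC ∘ₗ rhor =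
    Algebra.linearMap k H ∘ₗ εC
  antipode_rhol : rhol ∘ₗ SC = LinearMap.lTensor H SC ∘ₗ rhol
  antipode_rhor : rhor ∘ₗ SC = LinearMap.rTensor H SC ∘ₗ rhor

variable {C H : Type} [CommRing C] [CommRing H] [Algebra k C] [Algebra k H]
  {ΔC : C →ₗ[k] C ⊗[k] C} {εC : C →ₗ[k] k} {SC : C →ₗ[k] C}
  {ΔH : H →ₗ[k] H ⊗[k] H} {εH : H →ₗ[k] k}

/-- `Dm` is the comultiplication of the L-R smash coproduct `C ⋉ H`:
`Δ(c ⋉ h) = (c₁[0] ⋉ c₂₍₋₁₎h₁) ⊗ (c₂₍₀₎ ⋉ h₂c₁[1])`. -/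
def IsSmashCoComul (D : BicomoduleHopfData k C H ΔC εC SC ΔH εH)
    (Dm : C ⊗[k] H →ₗ[k] (C ⊗[k] H) ⊗[k] (C ⊗[k] H)) : Prop :=
  ∀ (c : C) (h : H) (ι κ ι1 ι2 : Type) (s : Finset ι) (c1 c2 : ι → C)
    (t : Finset κ) (h1 h2 : κ → H)
    (p : ι → Finset ι1) (cO : ι → ι1 → C) (cI : ι → ι1 → H)
    (q : ι → Finset ι2) (cm : ι → ι2 → H) (cz : ι → ι2 → C),
    ΔC c = ∑ i ∈ s, c1 i ⊗ₜ[k] c2 i →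
    ΔH h = ∑ j ∈ t, h1 j ⊗ₜ[k] h2 j →
    (∀ i, D.rhor (c1 i) = ∑ a ∈ p i, cO i a ⊗ₜ[k] cI i a) →
    (∀ i, D.rhol (c2 i) = ∑ b ∈ q i, cm i b ⊗ₜ[k] cz i b) →
    Dm (c ⊗ₜ[k] h) = ∑ i ∈ s, ∑ j ∈ t, ∑ a ∈ p i, ∑ b ∈ q i,
      (cO i a ⊗ₜ[k] (cm i b * h1 j)) ⊗ₜ[k] (cz i b ⊗ₜ[k] (h2 j * cI i a))

/-- `v` is the antipode of the L-R smash coproduct `C ⋉ H`: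
`S(c ⋉ h) = S_C(c₍₀₎[0]) ⋉ S_H(c₍₋₁₎ c₍₀₎[1] h)`. -/
def IsSmashCoAntipode (D : BicomoduleHopfData k C H ΔC εC SC ΔH εH) (SH : H →ₗ[k] H)
    (v : C ⊗[k] H →ₗ[k] C ⊗[k] H) : Prop :=
  ∀ (c : C) (h : H) (ι ι1 : Type) (s : Finset ι) (mm : ι → H) (zz : ι → C)
    (p : ι → Finset ι1) (w : ι → ι1 → C) (u : ι → ι1 → H),
    D.rhol c = ∑ i ∈ s, mm i ⊗ₜ[k] zz i →
    (∀ i, D.rhor (zz i) = ∑ j ∈ p i, w i j ⊗ₜ[k] u i j) →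
    v (c ⊗ₜ[k] h) = ∑ i ∈ s, ∑ j ∈ p i, SC (w i j) ⊗ₜ[k] SH (mm i * u i j * h)

/-- `Bt` is the map `B̃(c ⋉ h) = R(c₍₀₎[0]) ⋉ B(c₍₋₁₎ c₍₀₎[1] h)` on `C ⋉ H`. -/
def IsBtilde (D : BicomoduleHopfData k C H ΔC εC SC ΔH εH)
    (R : C →ₗ[k] C) (B : H →ₗ[k] H)
    (Bt : C ⊗[k] H →ₗ[k] C ⊗[k] H) : Prop :=
  ∀ (c : C) (h : H) (ι ι1 : Type) (s : Finset ι) (mm : ι → H) (zz : ι → C)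
    (p : ι → Finset ι1) (w : ι → ι1 → C) (u : ι → ι1 → H),
    D.rhol c = ∑ i ∈ s, mm i ⊗ₜ[k] zz i →
    (∀ i, D.rhor (zz i) = ∑ j ∈ p i, w i j ⊗ₜ[k] u i j) →
    Bt (c ⊗ₜ[k] h) = ∑ i ∈ s, ∑ j ∈ p i, R (w i j) ⊗ₜ[k] B (mm i * u i j * h)

/-!
Applying `ε_H ⊗ ε_H` to the Rota–Baxter identity shows that the character `χ = ε_H ∘ B` is
idempotent for convolution; since the characters of a Hopf algebra form a group under
convolution, `χ = ε_H`. With this, the counit axioms of the two coactions collapse the Sweedler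
sums defining `B̃`, so that the algebra map `P = id ⊗ ε_H : C ⋉ H → C` satisfies
`P ∘ B̃ = R ∘ P`. Hence `R c = P (B̃ (c ⋉ 1))` is multiplicative and unital.
-/

open Coalgebra Bialgebra WithConv

namespace AlgHom

lemma convMul_apply_eq_sum {R A C ι : Type*} [CommSemiring R] [Semiring C] [Bialgebra R C]
    [CommSemiring A] [Algebra R A] (f g : WithConv (C →ₐ[R] A)) {x : C} {s : Finset ι}
    {a b : ι → C} (hx : comul (R := R) x = ∑ i ∈ s, a i ⊗ₜ[R] b i) :
    (f * g) x = ∑ i ∈ s, f (a i) * g (b i) := by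
  simp [convMul_apply, hx, map_sum]

end AlgHom

namespace IsRotaBaxterCoOp

variable {H : Type} [CommRing H] [HopfAlgebra k H] {B : H →ₗ[k] H}
  (hB : IsRotaBaxterCoOp (k := k) comul (HopfAlgebra.antipode k) B)
include hB

def toAlgHom : H →ₐ[k] H := AlgHom.ofLinearMap B hB.1 hB.2.1

lemma counit_comp_convMul_self :
    toConv ((counitAlgHom k H).comp hB.toAlgHom) * toConv ((counitAlgHom k H).comp hB.toAlgHom)
      = toConv ((counitAlgHom k H).comp hB.toAlgHom) := by
  set χ := toConv ((counitAlgHom k H).comp hB.toAlgHom)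
  have hχ : ∀ y, χ y = counit (R := k) (B y) := fun _ => rfl
  have hχinv : ∀ y, χ⁻¹ y = counit (R := k) (B (HopfAlgebra.antipode k y)) := fun _ => rfl
  ext x
  let Δx := ℛ k x
  let ΔBx := ℛ k (B x)
  have key := congrArg (Algebra.TensorProduct.lift (counitAlgHom k H) (counitAlgHom k H)
      fun _ _ => .all _ _)
    (hB.2.2 x _ _ _ _ Δx.index Δx.left Δx.right ΔBx.index ΔBx.left ΔBx.right
      (fun j => (ℛ k (ΔBx.left j)).index) (fun j => (ℛ k (ΔBx.left j)).left)
      (fun j => (ℛ k (ΔBx.left j)).right)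
      (fun j => (ℛ k (ΔBx.right j)).index) (fun j => (ℛ k (ΔBx.right j)).left)
      (fun j => (ℛ k (ΔBx.right j)).right)
      Δx.eq.symm ΔBx.eq.symm (fun j => (ℛ k _).eq.symm) (fun j => (ℛ k _).eq.symm))
  simp only [map_sum, Algebra.TensorProduct.lift_tmul] at key
  rw [AlgHom.convMul_apply_eq_sum _ _ Δx.eq.symm]
  refine key.trans ?_
  calc _ = ∑ j ∈ ΔBx.index, (1 * χ) (ΔBx.left j) * (1 * χ⁻¹) (ΔBx.right j) := by
        refine Finset.sum_congr rfl fun j _ => ?_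
        rw [AlgHom.convMul_apply_eq_sum _ _ (ℛ k _).eq.symm,
          AlgHom.convMul_apply_eq_sum _ _ (ℛ k _).eq.symm, Finset.sum_mul_sum]
        refine Finset.sum_congr rfl fun l _ => Finset.sum_congr rfl fun m _ => ?_
        simp only [hχ, hχinv, AlgHom.convOne_apply, counitAlgHom_apply, hB.2.1, counit_mul,
          Algebra.algebraMap_self, RingHom.id_apply]
        ring
    _ = (χ * χ⁻¹) (B x) := by
        rw [one_mul, one_mul, AlgHom.convMul_apply_eq_sum _ _ ΔBx.eq.symm]
    _ = χ x := by rw [mul_inv_cancel, AlgHom.convOne_apply]; rfl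

theorem counit_apply (x : H) : counit (R := k) (B x) = counit (R := k) x := by
  have h := congrArg (fun f => f x) (mul_eq_left.mp hB.counit_comp_convMul_self)
  simpa [toAlgHom] using h

end IsRotaBaxterCoOp

namespace BicomoduleHopfData

variable (D : BicomoduleHopfData k C H ΔC εC SC ΔH εH) {ι : Type} {s : Finset ι}

theorem sum_counit_smul_of_rhol_eq {c : C} {m : ι → H} {z : ι → C}
    (h : D.rhol c = ∑ i ∈ s, m i ⊗ₜ[k] z i) : ∑ i ∈ s, εH (m i) • z i = c := by
  simpa [h, map_sum] using LinearMap.congr_fun D.counit_coact_l c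

theorem sum_counit_smul_of_rhor_eq {c : C} {w : ι → C} {u : ι → H}
    (h : D.rhor c = ∑ i ∈ s, w i ⊗ₜ[k] u i) : ∑ i ∈ s, εH (u i) • w i = c := by
  simpa [h, map_sum] using LinearMap.congr_fun D.counit_coact_r c

end BicomoduleHopfData

section idTensorCounit

variable (k) (C H : Type) [CommRing C] [CommRing H] [Algebra k C] [Bialgebra k H]

def idTensorCounit : C ⊗[k] H →ₐ[k] C :=
  (Algebra.TensorProduct.rid k k C).toAlgHom.comp
    (Algebra.TensorProduct.map (AlgHom.id k C) (counitAlgHom k H))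

variable {k C H}

@[simp]
theorem idTensorCounit_tmul (c : C) (h : H) :
    idTensorCounit k C H (c ⊗ₜ h) = counit (R := k) h • c := by
  simp [idTensorCounit]

variable {ΔC : C →ₗ[k] C ⊗[k] C} {εC : C →ₗ[k] k} {SC : C →ₗ[k] C}
  {D : BicomoduleHopfData k C H ΔC εC SC comul counit} {R : C →ₗ[k] C} {B : H →ₗ[k] H}
  {Bt : C ⊗[k] H →ₗ[k] C ⊗[k] H}

theorem IsBtilde.idTensorCounit_apply (hBt : IsBtilde D R B Bt)
    (hB : ∀ h, counit (R := k) (B h) = counit h) (X : C ⊗[k] H) :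
    idTensorCounit k C H (Bt X) = R (idTensorCounit k C H X) := by
  refine LinearMap.congr_fun (f := (idTensorCounit k C H).toLinearMap ∘ₗ Bt)
    (g := R ∘ₗ (idTensorCounit k C H).toLinearMap) (TensorProduct.ext' fun c h => ?_) X
  obtain ⟨s, hs⟩ := TensorProduct.exists_finset (R := k) (D.rhol c)
  choose p hp using fun z : C => TensorProduct.exists_finset (R := k) (D.rhor z)
  have hRc : R c = ∑ i ∈ s, ∑ j ∈ p i.2, (counit (R := k) i.1 * counit j.2) • R j.1 := by
    calc R c = R (∑ i ∈ s, counit (R := k) i.1 • i.2) := by rw [D.sum_counit_smul_of_rhol_eq hs]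
      _ = R (∑ i ∈ s, counit (R := k) i.1 • ∑ j ∈ p i.2, counit (R := k) j.2 • j.1) := by
        simp only [D.sum_counit_smul_of_rhor_eq (hp _)]
      _ = _ := by simp only [map_sum, map_smul, Finset.smul_sum, smul_smul]
  simp only [LinearMap.comp_apply, AlgHom.toLinearMap_apply, idTensorCounit_tmul,
    hBt c h _ _ s Prod.fst Prod.snd (fun i => p i.2) (fun _ j => j.1) (fun _ j => j.2) hs
      (fun i => hp i.2), map_sum, hB, counit_mul, map_smul, hRc, Finset.smul_sum, smul_smul,
    mul_comm (counit h)]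

end idTensorCounit

/-- If `B̃(c ⋉ h) = R(c₍₀₎[0]) ⋉ B(c₍₋₁₎ c₍₀₎[1] h)` is an algebra map on the L-R smash
coproduct `C ⋉ H` (with componentwise multiplication), then `R` is an algebra map. -/
theorem algebraMap_of_Btilde_algebraMap
    {k C H : Type} [Field k] [CommRing C] [CommRing H] [HopfAlgebra k C] [HopfAlgebra k H]
    (D : BicomoduleHopfData k C H Coalgebra.comul Coalgebra.counit (HopfAlgebra.antipode k)
      Coalgebra.comul Coalgebra.counit)
    (R : C →ₗ[k] C) (B : H →ₗ[k] H)
    (hB : IsRotaBaxterCoOp Coalgebra.comul (HopfAlgebra.antipode (R := k)) B)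
    (Bt : C ⊗[k] H →ₗ[k] C ⊗[k] H) (hBt : IsBtilde D R B Bt)
    (hmul : ∀ X Y : C ⊗[k] H, Bt (X * Y) = Bt X * Bt Y)
    (hone : Bt 1 = 1) :
    (∀ c d : C, R (c * d) = R c * R d) ∧ R 1 = 1 := by
  have hR : ∀ c : C, R c = idTensorCounit k C H (Bt (c ⊗ₜ 1)) := by
    simp [hBt.idTensorCounit_apply hB.counit_apply]
  refine ⟨fun c d => ?_, ?_⟩
  · rw [hR, hR c, hR d, ← map_mul, ← hmul, Algebra.TensorProduct.tmul_mul_tmul, one_mul]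
  · rw [hR, ← Algebra.TensorProduct.one_def, hone, map_one]

end
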